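/- In the proof of the exponential mechanism's utility guarantee, the following tail bound holds: for a fixed dataset D, any finite nonempty H, score function s with finite positive sensitivity Δs, ε > 0, OPT = max_{h∈H} s(D,h), and any real c, P[ s(D, M_exp(D)) ≤ c ] ≤ |H| · exp( ε·(c − OPT) / (2Δs) ). -/
import Mathlib


open MeasureTheory ENNReal
open scoped Classical

/-- Two datasets (finite multisets over a universe `U`) are adjacent under the
add/remove notion if their symmetric difference has cardinality 1. -/
def Adjacent {U : Type*} [DecidableEq U] (D D' : Multiset U) : Prop :=
  Multiset.card ((D - D') + (D' - D)) = 1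

/-- The probability that the exponential mechanism with score function `s`,
sensitivity `Δs` and privacy parameter `ε` outputs `h` on input dataset `D`. -/
noncomputable def expMechProb {U H : Type*} [Fintype H]
    (s : Multiset U → H → ℝ) (Δs ε : ℝ) (D : Multiset U) (h : H) : ℝ :=
  Real.exp (ε * s D h / (2 * Δs)) / ∑ h' : H, Real.exp (ε * s D h' / (2 * Δs))

/-- **Tail bound for the exponential mechanism.** Fix a dataset `D`, let
`OPT = max_{h∈H} s(D,h)`. Then for every real `c`,
`P[ s(D, M_exp(D)) ≤ c ] ≤ |H| · exp(ε·(c − OPT)/(2Δs))`. -/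
theorem exponential_mechanism_tail {U H : Type*} [DecidableEq U] [Fintype H] [Nonempty H]
    (s : Multiset U → H → ℝ) (Δs ε : ℝ) (hΔ : 0 < Δs) (hε : 0 < ε)
    (hsens : ∀ (h : H) (D D' : Multiset U), Adjacent D D' → |s D h - s D' h| ≤ Δs)
    (D : Multiset U) (c : ℝ) :
    ∑ h ∈ Finset.univ.filter (fun h : H => s D h ≤ c), expMechProb s Δs ε D h ≤
      (Fintype.card H : ℝ) *
        Real.exp (ε * (c - Finset.univ.sup' Finset.univ_nonempty (s D)) / (2 * Δs)) := by

  set OPT := Finset.univ.sup' Finset.univ_nonempty (s D) with hOPT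
  set Z := ∑ h' : H, Real.exp (ε * s D h' / (2 * Δs)) with hZ
  have hZpos : 0 < Z := Finset.sum_pos (fun i _ => Real.exp_pos _) ⟨Classical.arbitrary H, Finset.mem_univ _⟩
  obtain ⟨h₀, _, hh₀⟩ := Finset.exists_mem_eq_sup' (Finset.univ_nonempty (α := H)) (s D)
  have hZge : Real.exp (ε * OPT / (2 * Δs)) ≤ Z := by
    rw [hOPT, hh₀, hZ]
    exact Finset.single_le_sum (f := fun h => Real.exp (ε * s D h / (2 * Δs)))
      (fun i _ => (Real.exp_pos _).le) (Finset.mem_univ h₀)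
  have hcoef : 0 < ε / (2 * Δs) := div_pos hε (by linarith)
  have key : ∀ h ∈ Finset.univ.filter (fun h : H => s D h ≤ c),
      expMechProb s Δs ε D h ≤ Real.exp (ε * (c - OPT) / (2 * Δs)) := by
    intro h hh
    have hsc : s D h ≤ c := (Finset.mem_filter.mp hh).2
    have h1 : Real.exp (ε * s D h / (2 * Δs)) ≤ Real.exp (ε * c / (2 * Δs)) := by
      apply Real.exp_le_exp.mpr
      rw [div_le_div_iff₀ (by linarith) (by linarith)]
      nlinarith [mul_le_mul_of_nonneg_left hsc hε.le]
    calc expMechProb s Δs ε D h = Real.exp (ε * s D h / (2 * Δs)) / Z := rfl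
      _ ≤ Real.exp (ε * c / (2 * Δs)) / Real.exp (ε * OPT / (2 * Δs)) :=
          div_le_div₀ (Real.exp_pos _).le h1 (Real.exp_pos _) hZge
      _ = Real.exp (ε * (c - OPT) / (2 * Δs)) := by
          rw [← Real.exp_sub]; ring_nf
  calc ∑ h ∈ Finset.univ.filter (fun h : H => s D h ≤ c), expMechProb s Δs ε D h
      ≤ ∑ h ∈ Finset.univ.filter (fun h : H => s D h ≤ c),
          Real.exp (ε * (c - OPT) / (2 * Δs)) := Finset.sum_le_sum key
    _ = (Finset.univ.filter (fun h : H => s D h ≤ c)).card * Real.exp (ε * (c - OPT) / (2 * Δs)) := by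
          rw [Finset.sum_const, nsmul_eq_mul]
    _ ≤ (Fintype.card H : ℝ) * Real.exp (ε * (c - OPT) / (2 * Δs)) := by
          apply mul_le_mul_of_nonneg_right _ (Real.exp_pos _).le
          exact_mod_cast Finset.card_filter_le _ _
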